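/- arXiv:1910.14381 — 2 statements merged into one kernel-verified Lean document; each statement's English description precedes it below -/
import Mathlib

section
/- Completeness in the finitary case: for all finitary commutative regular expressions e and f (containing no star), e ≡ f if and only if ⟦e⟧ = ⟦f⟧. -/
namespace CKAnote

/-- Commutative regular expressions over an alphabet `α`. -/
inductive CRE (α : Type) where
  | zero : CRE α
  | one : CRE α
  | letter : α → CRE α
  | mul : CRE α → CRE α → CRE α
  | union : CRE α → CRE α → CRE α
  | star : CRE α → CRE α

variable {α : Type} [Fintype α] [DecidableEq α]

/-- Semantics of a commutative regular expression as a set of Parikh vectors. -/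
def sem : CRE α → Set (α → ℕ)
  | .zero => ∅
  | .one => {0}
  | .letter a => {Pi.single a 1}
  | .mul e f => {w | ∃ u ∈ sem e, ∃ v ∈ sem f, w = u + v}
  | .union e f => sem e ∪ sem f
  | .star e => ↑(AddSubmonoid.closure (sem e))

/-- Provable equality: the smallest congruence containing the axioms of
commutative Kleene algebra (where `e ≤ f` abbreviates `e ∪ f ≡ f`). -/
inductive CKA : CRE α → CRE α → Prop
  | refl (e : CRE α) : CKA e e
  | symm {e f : CRE α} : CKA e f → CKA f e
  | trans {e f g : CRE α} : CKA e f → CKA f g → CKA e g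
  | mul_congr {e e' f f' : CRE α} : CKA e e' → CKA f f' → CKA (e.mul f) (e'.mul f')
  | union_congr {e e' f f' : CRE α} : CKA e e' → CKA f f' → CKA (e.union f) (e'.union f')
  | star_congr {e e' : CRE α} : CKA e e' → CKA e.star e'.star
  | mul_assoc (e f g : CRE α) : CKA (e.mul (f.mul g)) ((e.mul f).mul g)
  | mul_comm (e f : CRE α) : CKA (e.mul f) (f.mul e)
  | one_mul (e : CRE α) : CKA (CRE.one.mul e) e
  | union_assoc (e f g : CRE α) : CKA (e.union (f.union g)) ((e.union f).union g)
  | union_comm (e f : CRE α) : CKA (e.union f) (f.union e)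
  | union_idem (e : CRE α) : CKA (e.union e) e
  | zero_union (e : CRE α) : CKA (CRE.zero.union e) e
  | zero_mul (e : CRE α) : CKA (CRE.zero.mul e) CRE.zero
  | left_distrib (e f g : CRE α) : CKA (e.mul (f.union g)) ((e.mul f).union (e.mul g))
  | star_unfold (e : CRE α) : CKA ((CRE.one.union (e.mul e.star)).union e.star) e.star
  | star_lfp {e f : CRE α} : CKA ((e.mul f).union f) f → CKA ((e.star.mul f).union f) f

/-- `e ≤ f`, i.e. `e ∪ f ≡ f`. -/
def leq (e f : CRE α) : Prop := CKA (e.union f) f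

/-- `e^n`, the `n`-fold product of `e` with itself. -/
def pow (e : CRE α) : ℕ → CRE α
  | 0 => CRE.one
  | n + 1 => e.mul (pow e n)

/-- `e^{<n}`, i.e. `(e ∪ 1)^(n-1)` for `n > 0` and `0` for `n = 0`. -/
def ltPow (e : CRE α) : ℕ → CRE α
  | 0 => CRE.zero
  | n + 1 => pow (e.union CRE.one) n

/-- Finite union of a list of expressions. -/
def unionList : List (CRE α) → CRE α
  | [] => CRE.zero
  | e :: l => e.union (unionList l)

/-- Finite product of a list of expressions. -/
def prodList : List (CRE α) → CRE α
  | [] => CRE.one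
  | e :: l => e.mul (prodList l)

/-- `expr(u)`: the product over `a ∈ α` of `u a` copies of the letter `a`. -/
noncomputable def exprVec (u : α → ℕ) : CRE α :=
  prodList ((Finset.univ : Finset α).toList.map (fun a => pow (CRE.letter a) (u a)))

/-- The union `⋃_{b ∈ B} expr(b)` for a finite set of Parikh vectors `B`. -/
noncomputable def unionVecs (B : Finset (α → ℕ)) : CRE α :=
  unionList (B.toList.map exprVec)

/-- The linear expression `expr(u) · (⋃_{b ∈ B} expr(b))*`. -/
noncomputable def linExpr (u : α → ℕ) (B : Finset (α → ℕ)) : CRE α :=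
  (exprVec u).mul (unionVecs B).star

/-- A finite set of Parikh vectors is independent when every Parikh vector
admits at most one representation as an `ℕ`-linear combination of its elements. -/
def Independent (B : Finset (α → ℕ)) : Prop :=
  ∀ c d : (α → ℕ) → ℕ, (∑ b ∈ B, c b • b) = (∑ b ∈ B, d b • b) → ∀ b ∈ B, c b = d b

/-- The semilinear expression associated to a list of linear data:
the finite union of the corresponding linear expressions. -/
noncomputable def semiLin (L : List ((α → ℕ) × Finset (α → ℕ))) : CRE α :=
  unionList (L.map (fun p => linExpr p.1 p.2))

/-- The dimension of a semilinear expression: the maximum of the dimensions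
of its linear components. -/
def dimSL (L : List ((α → ℕ) × Finset (α → ℕ))) : ℕ :=
  (L.map (fun p => p.2.card)).foldr max 0

/-- Finitary (star-free) expressions. -/
def NoStar : CRE α → Prop
  | .zero => True
  | .one => True
  | .letter _ => True
  | .mul e f => NoStar e ∧ NoStar f
  | .union e f => NoStar e ∧ NoStar f
  | .star _ => False

/-- Coordinatewise embedding of `ℕ^α` into `ℚ^α`. -/
def toQ (v : α → ℕ) : α → ℚ := fun a => (v a : ℚ)

end CKAnote

/-!
Every star-free expression is provably equal to a finite union of monomials `expr(u)`:
distributivity pushes products inside unions, and commutativity merges two monomials,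
`expr(u) · expr(v) ≡ expr(u + v)`. By idempotence and commutativity of `∪` such a union depends
only on its finite set `B` of exponent vectors, and `B` is exactly its semantics. Hence
semantically equal star-free expressions have provably equal normal forms; the converse is
soundness.
-/

open scoped Pointwise

theorem AddSubmonoid.closure_add_subset {M : Type*} [AddMonoid M] {S T : Set M}
    (h : S + T ⊆ T) : (AddSubmonoid.closure S : Set M) + T ⊆ T := by
  rintro _ ⟨u, hu, v, hv, rfl⟩
  induction hu using AddSubmonoid.closure_induction generalizing v with
  | mem x hx => exact h (Set.add_mem_add hx hv)
  | zero => simpa using hv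
  | add x y _ _ ihx ihy => simpa only [add_assoc] using ihx _ (ihy v hv)

namespace CKAnote

variable {α : Type}

theorem CKA.mul_one (e : CRE α) : CKA (e.mul .one) e :=
  (CKA.mul_comm _ _).trans (CKA.one_mul e)

theorem CKA.union_zero (e : CRE α) : CKA (e.union .zero) e :=
  (CKA.union_comm _ _).trans (CKA.zero_union e)

theorem CKA.right_distrib (e f g : CRE α) :
    CKA ((e.union f).mul g) ((e.mul g).union (f.mul g)) :=
  (CKA.mul_comm _ _).trans <| (CKA.left_distrib g e f).trans <|
    CKA.union_congr (CKA.mul_comm _ _) (CKA.mul_comm _ _)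

theorem CKA.mul_mul_mul_comm (e f g h : CRE α) :
    CKA ((e.mul f).mul (g.mul h)) ((e.mul g).mul (f.mul h)) := by
  have hfgh : CKA (f.mul (g.mul h)) (g.mul (f.mul h)) :=
    (CKA.mul_assoc f g h).trans <|
      (CKA.mul_congr (CKA.mul_comm f g) (CKA.refl h)).trans (CKA.mul_assoc g f h).symm
  exact (CKA.mul_assoc _ _ _).symm.trans <|
    (CKA.mul_congr (CKA.refl e) hfgh).trans (CKA.mul_assoc _ _ _)

theorem CKA.leq {e f : CRE α} (h : CKA e f) : leq e f :=
  (CKA.union_congr h (CKA.refl f)).trans (CKA.union_idem f)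

theorem leq_trans {e f g : CRE α} (hef : leq e f) (hfg : leq f g) : leq e g :=
  (CKA.union_congr (CKA.refl e) hfg.symm).trans <| (CKA.union_assoc e f g).trans <|
    (CKA.union_congr hef (CKA.refl g)).trans hfg

theorem leq_antisymm {e f : CRE α} (hef : leq e f) (hfe : leq f e) : CKA e f :=
  hfe.symm.trans ((CKA.union_comm f e).trans hef)

theorem leq_union_left (e f : CRE α) : leq e (e.union f) :=
  (CKA.union_assoc e e f).trans (CKA.union_congr (CKA.union_idem e) (CKA.refl f))

theorem leq_union_right (e f : CRE α) : leq f (e.union f) :=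
  (CKA.union_comm _ _).trans <| (CKA.union_assoc e f f).symm.trans <|
    CKA.union_congr (CKA.refl e) (CKA.union_idem f)

theorem union_leq {e f g : CRE α} (heg : leq e g) (hfg : leq f g) : leq (e.union f) g :=
  (CKA.union_assoc e f g).symm.trans <| (CKA.union_congr (CKA.refl e) hfg).trans heg

theorem mul_leq_mul_right {e e' : CRE α} (h : leq e e') (f : CRE α) :
    leq (e.mul f) (e'.mul f) :=
  (CKA.right_distrib e e' f).symm.trans (CKA.mul_congr h (CKA.refl f))

theorem mul_leq_mul {e e' f f' : CRE α} (he : leq e e') (hf : leq f f') :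
    leq (e.mul f) (e'.mul f') :=
  leq_trans (mul_leq_mul_right he f) <| leq_trans (CKA.mul_comm e' f).leq <|
    leq_trans (mul_leq_mul_right hf e') (CKA.mul_comm f' e').leq

theorem leq_unionList {e : CRE α} {l : List (CRE α)} (h : e ∈ l) : leq e (unionList l) := by
  induction l with
  | nil => simp at h
  | cons f l ih =>
    rcases List.mem_cons.mp h with rfl | h
    · exact leq_union_left _ _
    · exact leq_trans (ih h) (leq_union_right _ _)

theorem unionList_leq {g : CRE α} {l : List (CRE α)} (h : ∀ e ∈ l, leq e g) :
    leq (unionList l) g := by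
  induction l with
  | nil => exact CKA.zero_union g
  | cons e l ih => exact union_leq (h e (by simp)) (ih fun f hf => h f (by simp [hf]))

theorem unionList_mul_leq {f g : CRE α} {l : List (CRE α)} (h : ∀ e ∈ l, leq (e.mul f) g) :
    leq ((unionList l).mul f) g := by
  induction l with
  | nil => exact (CKA.union_congr (CKA.zero_mul f) (CKA.refl g)).trans (CKA.zero_union g)
  | cons e l ih =>
    exact (CKA.union_congr (CKA.right_distrib _ _ _) (CKA.refl g)).trans <|
      union_leq (h e (by simp)) (ih fun e' he' => h e' (by simp [he']))

theorem CKA.pow_add (e : CRE α) (m n : ℕ) : CKA (pow e (m + n)) ((pow e m).mul (pow e n)) := by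
  induction m with
  | zero => simpa [pow] using (CKA.one_mul (pow e n)).symm
  | succ m ih =>
    rw [Nat.add_right_comm]
    exact (CKA.mul_congr (CKA.refl e) ih).trans (CKA.mul_assoc _ _ _)

section prodList

variable {β : Type*} {l : List β}

theorem prodList_map_congr {f g : β → CRE α} (h : ∀ b ∈ l, CKA (f b) (g b)) :
    CKA (prodList (l.map f)) (prodList (l.map g)) := by
  induction l with
  | nil => exact CKA.refl _
  | cons b l ih => exact CKA.mul_congr (h b (by simp)) (ih fun c hc => h c (by simp [hc]))

theorem prodList_map_mul (f g : β → CRE α) :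
    CKA (prodList (l.map fun b => (f b).mul (g b)))
      ((prodList (l.map f)).mul (prodList (l.map g))) := by
  induction l with
  | nil => exact (CKA.one_mul _).symm
  | cons b l ih => exact (CKA.mul_congr (CKA.refl _) ih).trans (CKA.mul_mul_mul_comm _ _ _ _)

theorem prodList_map_eq_one {g : β → CRE α} (h : ∀ b ∈ l, CKA (g b) .one) :
    CKA (prodList (l.map g)) .one := by
  induction l with
  | nil => exact CKA.refl _
  | cons b l ih =>
    exact (CKA.mul_congr (h b (by simp)) (ih fun c hc => h c (by simp [hc]))).trans
      (CKA.one_mul _)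

theorem prodList_map_eq_of_ne {g : β → CRE α} {a : β} (hl : l.Nodup) (ha : a ∈ l)
    (h : ∀ b ∈ l, b ≠ a → CKA (g b) .one) : CKA (prodList (l.map g)) (g a) := by
  induction l with
  | nil => simp at ha
  | cons b l ih =>
    obtain ⟨hbl, hl⟩ := List.nodup_cons.mp hl
    rcases List.mem_cons.mp ha with rfl | ha
    · have hone : CKA (prodList (l.map g)) .one :=
        prodList_map_eq_one fun c hc => h c (by simp [hc]) (by rintro rfl; exact hbl hc)
      exact (CKA.mul_congr (CKA.refl _) hone).trans (CKA.mul_one _)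
    · have hb : CKA (g b) .one := h b (by simp) (by rintro rfl; exact hbl ha)
      exact (CKA.mul_congr hb (ih hl ha fun c hc => h c (by simp [hc]))).trans (CKA.one_mul _)

end prodList

section NormalForm

variable [Fintype α]

theorem exprVec_zero : CKA (exprVec (0 : α → ℕ)) .one :=
  prodList_map_eq_one fun _ _ => CKA.refl _

theorem exprVec_add (u v : α → ℕ) :
    CKA (exprVec (u + v)) ((exprVec u).mul (exprVec v)) :=
  (prodList_map_congr fun a _ => CKA.pow_add (CRE.letter a) (u a) (v a)).trans
    (prodList_map_mul _ _)

theorem exprVec_single [DecidableEq α] (a : α) :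
    CKA (exprVec (Pi.single a 1)) (CRE.letter a) := by
  refine (prodList_map_eq_of_ne (a := a) (Finset.nodup_toList _) (by simp)
    fun b _ hb => ?_).trans ?_
  · rw [Pi.single_eq_of_ne hb]
    exact CKA.refl _
  · rw [Pi.single_eq_same]
    exact CKA.mul_one _

theorem leq_unionVecs {u : α → ℕ} {B : Finset (α → ℕ)} (hu : u ∈ B) :
    leq (exprVec u) (unionVecs B) :=
  leq_unionList (List.mem_map_of_mem (Finset.mem_toList.mpr hu))

theorem unionVecs_leq {g : CRE α} {B : Finset (α → ℕ)} (h : ∀ u ∈ B, leq (exprVec u) g) :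
    leq (unionVecs B) g :=
  unionList_leq fun e he => by
    obtain ⟨u, hu, rfl⟩ := List.mem_map.mp he
    exact h u (Finset.mem_toList.mp hu)

theorem unionVecs_mul_leq {f g : CRE α} {B : Finset (α → ℕ)}
    (h : ∀ u ∈ B, leq ((exprVec u).mul f) g) : leq ((unionVecs B).mul f) g :=
  unionList_mul_leq fun e he => by
    obtain ⟨u, hu, rfl⟩ := List.mem_map.mp he
    exact h u (Finset.mem_toList.mp hu)

theorem unionVecs_singleton (u : α → ℕ) : CKA (unionVecs {u}) (exprVec u) := by
  rw [unionVecs, Finset.toList_singleton]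
  exact CKA.union_zero _

theorem unionVecs_union (B C : Finset (α → ℕ)) :
    CKA ((unionVecs B).union (unionVecs C)) (unionVecs (B ∪ C)) := by
  refine leq_antisymm ?_ (unionVecs_leq fun u hu => ?_)
  · exact union_leq (unionVecs_leq fun u hu => leq_unionVecs (Finset.mem_union_left C hu))
      (unionVecs_leq fun u hu => leq_unionVecs (Finset.mem_union_right B hu))
  · rcases Finset.mem_union.mp hu with hu | hu
    · exact leq_trans (leq_unionVecs hu) (leq_union_left _ _)
    · exact leq_trans (leq_unionVecs hu) (leq_union_right _ _)

theorem unionVecs_mul (B C : Finset (α → ℕ)) :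
    CKA ((unionVecs B).mul (unionVecs C)) (unionVecs (B + C)) := by
  refine leq_antisymm (unionVecs_mul_leq fun u hu => ?_) (unionVecs_leq fun w hw => ?_)
  · refine leq_trans (CKA.mul_comm _ _).leq (unionVecs_mul_leq fun v hv => ?_)
    exact leq_trans ((CKA.mul_comm _ _).trans (exprVec_add u v).symm).leq
      (leq_unionVecs (Finset.add_mem_add hu hv))
  · obtain ⟨u, hu, v, hv, rfl⟩ := Finset.mem_add.mp hw
    exact leq_trans (exprVec_add u v).leq (mul_leq_mul (leq_unionVecs hu) (leq_unionVecs hv))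

theorem NoStar.exists_unionVecs [DecidableEq α] {e : CRE α} (he : NoStar e) :
    ∃ B : Finset (α → ℕ), CKA e (unionVecs B) := by
  induction e with
  | zero => exact ⟨∅, by rw [unionVecs, Finset.toList_empty]; exact CKA.refl _⟩
  | one => exact ⟨{0}, exprVec_zero.symm.trans (unionVecs_singleton 0).symm⟩
  | letter a =>
    exact ⟨{Pi.single a 1}, (exprVec_single a).symm.trans (unionVecs_singleton _).symm⟩
  | mul e f ihe ihf =>
    obtain ⟨B, hB⟩ := ihe he.1
    obtain ⟨C, hC⟩ := ihf he.2
    exact ⟨B + C, (CKA.mul_congr hB hC).trans (unionVecs_mul B C)⟩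
  | union e f ihe ihf =>
    obtain ⟨B, hB⟩ := ihe he.1
    obtain ⟨C, hC⟩ := ihf he.2
    exact ⟨B ∪ C, (CKA.union_congr hB hC).trans (unionVecs_union B C)⟩
  | star e => exact he.elim

end NormalForm

section semantics

variable [DecidableEq α]

theorem sem_mul (e f : CRE α) : sem (e.mul f) = sem e + sem f := by
  ext w
  simp [sem, Set.mem_add, eq_comm]

theorem sem_union (e f : CRE α) : sem (e.union f) = sem e ∪ sem f := rfl

theorem sem_star (e : CRE α) : sem e.star = AddSubmonoid.closure (sem e) := rfl

theorem sem_pow_letter (a : α) (n : ℕ) : sem (pow (CRE.letter a) n) = {Pi.single a n} := by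
  induction n with
  | zero => simp [pow, sem]
  | succ n ih =>
    rw [pow, sem_mul, ih, sem, Set.singleton_add_singleton, ← Pi.single_add, Nat.add_comm]

theorem sem_prodList_map {β : Type*} (l : List β) {g : β → CRE α} {v : β → α → ℕ}
    (h : ∀ b ∈ l, sem (g b) = {v b}) : sem (prodList (l.map g)) = {(l.map v).sum} := by
  induction l with
  | nil => rfl
  | cons b l ih =>
    rw [List.map_cons, prodList, sem_mul, h b (by simp), ih fun c hc => h c (by simp [hc]),
      Set.singleton_add_singleton, List.map_cons, List.sum_cons]

theorem sem_exprVec [Fintype α] (u : α → ℕ) : sem (exprVec u) = {u} := by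
  rw [exprVec, sem_prodList_map _ fun a _ => sem_pow_letter a (u a), Finset.sum_map_toList,
    Finset.univ_sum_single]

theorem sem_unionList (l : List (CRE α)) : sem (unionList l) = ⋃ e ∈ l, sem e := by
  induction l with
  | nil => simp [unionList, sem]
  | cons e l ih => simp [unionList, sem, ih]

theorem sem_unionVecs [Fintype α] (B : Finset (α → ℕ)) : sem (unionVecs B) = B := by
  ext w
  simp [unionVecs, sem_unionList, sem_exprVec, eq_comm]

theorem CKA.sem_eq {e f : CRE α} (h : CKA e f) : sem e = sem f := by
  induction h with
  | refl => rfl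
  | symm _ ih => exact ih.symm
  | trans _ _ ih₁ ih₂ => exact ih₁.trans ih₂
  | mul_congr _ _ ih₁ ih₂ => rw [sem_mul, sem_mul, ih₁, ih₂]
  | union_congr _ _ ih₁ ih₂ => rw [sem_union, sem_union, ih₁, ih₂]
  | star_congr _ ih => rw [sem_star, sem_star, ih]
  | mul_assoc => simp only [sem_mul, add_assoc]
  | mul_comm => simp only [sem_mul, add_comm]
  | one_mul => rw [sem_mul, sem, Set.singleton_zero, zero_add]
  | union_assoc => exact (Set.union_assoc _ _ _).symm
  | union_comm => exact Set.union_comm _ _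
  | union_idem => exact Set.union_self _
  | zero_union => exact Set.empty_union _
  | zero_mul => rw [sem_mul, sem, Set.empty_add]
  | left_distrib => simp only [sem_mul, sem_union, Set.add_union]
  | star_unfold e =>
    rw [sem_union, sem_union, sem_mul, Set.union_eq_right, sem_star]
    refine Set.union_subset (Set.singleton_subset_iff.mpr (AddSubmonoid.zero_mem _)) ?_
    rintro _ ⟨u, hu, v, hv, rfl⟩
    exact AddSubmonoid.add_mem _ (AddSubmonoid.subset_closure hu) hv
  | star_lfp _ ih =>
    rw [sem_union, sem_mul, Set.union_eq_right] at ih ⊢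
    exact AddSubmonoid.closure_add_subset ih

end semantics

variable [Fintype α] [DecidableEq α]

/-- Completeness in the finitary case: for star-free `e`, `f`,
`e ≡ f` iff `⟦e⟧ = ⟦f⟧`. -/
theorem completeness_fin (e f : CRE α) (he : NoStar e) (hf : NoStar f) :
    CKA e f ↔ sem e = sem f := by
  refine ⟨CKA.sem_eq, fun hsem => ?_⟩
  obtain ⟨B, heB⟩ := he.exists_unionVecs
  obtain ⟨C, hfC⟩ := hf.exists_unionVecs
  have hBC : B = C := by
    rw [← Finset.coe_inj, ← sem_unionVecs, ← sem_unionVecs, ← heB.sem_eq, ← hfC.sem_eq,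
      hsem]
  exact heB.trans (hBC ▸ hfC.symm)

end CKAnote
end

section
/- The law sum-to-prod of commutative Kleene algebra is derivable: for all commutative regular expressions e and f, (e ∪ f)* ≡ e*·f*. -/
open Computability

theorem Commute.kstar_left {K : Type*} [KleeneAlgebra K] {a b : K} (h : Commute a b) :
    Commute a∗ b := by
  apply le_antisymm
  · exact kstar_mul_le (le_mul_of_one_le_right' one_le_kstar) <| by
      grw [← mul_assoc, h.eq, mul_assoc, mul_kstar_le_kstar]
  · exact mul_kstar_le (le_mul_of_one_le_left' one_le_kstar) <| by
      grw [mul_assoc, ← h.eq, ← mul_assoc, kstar_mul_le_kstar]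

theorem Commute.kstar_add {K : Type*} [KleeneAlgebra K] {a b : K} (h : Commute a b) :
    (a + b)∗ = a∗ * b∗ := by
  apply le_antisymm
  · refine kstar_le_of_mul_le_right (one_le_mul one_le_kstar one_le_kstar) ?_
    rw [add_mul, ← mul_assoc, ← mul_assoc, ← h.kstar_left.eq, mul_assoc a∗]
    grw [mul_kstar_le_kstar, mul_kstar_le_kstar, add_idem]
  · calc a∗ * b∗ ≤ (a + b)∗ * (a + b)∗ := by gcongr <;> simp
      _ = (a + b)∗ := kstar_mul_kstar _

namespace CKAnote

variable {α : Type}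

instance CKA.setoid (α : Type) : Setoid (CRE α) where
  r := CKA
  iseqv := ⟨CKA.refl, CKA.symm, CKA.trans⟩

def FreeCKA (α : Type) : Type := Quotient (CKA.setoid α)

namespace FreeCKA

def mk : CRE α → FreeCKA α := Quotient.mk _

theorem mk_eq_mk {e f : CRE α} : mk e = mk f ↔ CKA e f := Quotient.eq

instance : Zero (FreeCKA α) := ⟨mk .zero⟩
instance : One (FreeCKA α) := ⟨mk .one⟩
instance : Add (FreeCKA α) := ⟨Quotient.map₂ CRE.union fun _ _ he _ _ hf => CKA.union_congr he hf⟩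
instance : Mul (FreeCKA α) := ⟨Quotient.map₂ CRE.mul fun _ _ he _ _ hf => CKA.mul_congr he hf⟩
instance : KStar (FreeCKA α) := ⟨Quotient.map CRE.star fun _ _ => CKA.star_congr⟩

instance : CommSemiring (FreeCKA α) where
  add_assoc := by rintro ⟨e⟩ ⟨f⟩ ⟨g⟩; exact Quotient.sound (CKA.union_assoc e f g).symm
  zero_add := by rintro ⟨e⟩; exact Quotient.sound (CKA.zero_union e)
  add_zero := by rintro ⟨e⟩; exact Quotient.sound ((CKA.union_comm _ _).trans (CKA.zero_union e))
  add_comm := by rintro ⟨e⟩ ⟨f⟩; exact Quotient.sound (CKA.union_comm e f)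
  nsmul := nsmulRec
  mul_assoc := by rintro ⟨e⟩ ⟨f⟩ ⟨g⟩; exact Quotient.sound (CKA.mul_assoc e f g).symm
  one_mul := by rintro ⟨e⟩; exact Quotient.sound (CKA.one_mul e)
  mul_one := by rintro ⟨e⟩; exact Quotient.sound ((CKA.mul_comm _ _).trans (CKA.one_mul e))
  zero_mul := by rintro ⟨e⟩; exact Quotient.sound (CKA.zero_mul e)
  mul_zero := by rintro ⟨e⟩; exact Quotient.sound ((CKA.mul_comm _ _).trans (CKA.zero_mul e))
  left_distrib := by rintro ⟨e⟩ ⟨f⟩ ⟨g⟩; exact Quotient.sound (CKA.left_distrib e f g)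
  right_distrib := by
    rintro ⟨e⟩ ⟨f⟩ ⟨g⟩
    exact Quotient.sound <| (CKA.mul_comm _ _).trans <| (CKA.left_distrib g e f).trans <|
      CKA.union_congr (CKA.mul_comm g e) (CKA.mul_comm g f)
  mul_comm := by rintro ⟨e⟩ ⟨f⟩; exact Quotient.sound (CKA.mul_comm e f)

instance : IdemSemiring (FreeCKA α) :=
  IdemSemiring.ofSemiring <| by rintro ⟨e⟩; exact Quotient.sound (CKA.union_idem e)

theorem one_add_mul_kstar_le (a : FreeCKA α) : 1 + a * a∗ ≤ a∗ := by
  induction a using Quotient.ind; exact Quotient.sound (CKA.star_unfold _)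

theorem kstar_mul_le_self {a b : FreeCKA α} : a * b ≤ b → a∗ * b ≤ b := by
  induction a, b using Quotient.inductionOn₂
  exact fun h => Quotient.sound (CKA.star_lfp (Quotient.exact h))

instance : KleeneAlgebra (FreeCKA α) where
  one_le_kstar a := le_self_add.trans (one_add_mul_kstar_le a)
  mul_kstar_le_kstar a := le_add_self.trans (one_add_mul_kstar_le a)
  kstar_mul_le_kstar a := (mul_comm a∗ a).trans_le (le_add_self.trans (one_add_mul_kstar_le a))
  kstar_mul_le_self _ _ := kstar_mul_le_self
  mul_kstar_le_self a b h := by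
    rw [mul_comm] at h ⊢
    exact kstar_mul_le_self h

end FreeCKA

variable [Fintype α] [DecidableEq α]

/-- The sum-to-prod law is derivable: `(e ∪ f)* ≡ e* · f*`. -/
theorem sum_to_prod (e f : CRE α) :
    CKA ((e.union f).star) (e.star.mul f.star) :=
  FreeCKA.mk_eq_mk.1 (Commute.all (FreeCKA.mk e) (FreeCKA.mk f)).kstar_add

end CKAnote
end
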